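/- arXiv:2210.06714 — 2 statements merged into one kernel-verified Lean document; each statement's English description precedes it below -/
import Mathlib

section
/- Let G be a cograph on 2n vertices admitting a partition (V1, V2) such that G[V1] is isomorphic to the complement of G[V2] and the edges between V1 and V2 form a perfect matching. Then n = 1 and G is the single edge K_2. -/
open SimpleGraph

/-- `(V1, V1ᶜ)` is a perfect matching cut of `G`. -/
def IsPerfectMatchingCut {V : Type*} (G : SimpleGraph V) (V1 : Set V) : Prop :=
  ∀ v : V, ∃! w : V, G.Adj v w ∧ (v ∈ V1 ↔ w ∉ V1)

/-!
Let `x ↦ x'` be the matching. If `x, y` lie on the same side and `xy` is an edge, then so is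
`x'y'`, for otherwise `x' x y y'` is an induced `P₄`; hence the matching is an isomorphism
`G[V1] ≅ G[V2]`. Likewise a side contains no induced path `x y z`, since `x' x y z` would be an
induced `P₄`: each side is a disjoint union of cliques, i.e. its complement is complete
multipartite. So `G[V2] ≅ G[V1] ≅ G[V2]ᶜ` is a self-complementary disjoint union of cliques.
Such a graph and its complement are both disjoint unions of cliques, which forces it to be
edgeless or complete, and a self-complementary edgeless or complete graph has at most one vertex.
Thus `n = 1`, and the two vertices are joined by the matching edge.
-/

namespace SimpleGraph

variable {V : Type*} {G : SimpleGraph V}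

lemma isIndContained_pathGraph_four {a b c d : V}
    (hab : G.Adj a b) (hbc : G.Adj b c) (hcd : G.Adj c d)
    (hac : ¬ G.Adj a c) (had : ¬ G.Adj a d) (hbd : ¬ G.Adj b d)
    (hac' : a ≠ c) (had' : a ≠ d) (hbd' : b ≠ d) :
    pathGraph 4 ⊴ G := by
  have := hab.ne; have := hbc.ne; have := hcd.ne
  have := hab.symm; have := hbc.symm; have := hcd.symm
  have : ¬ G.Adj c a := fun h => hac h.symm
  have : ¬ G.Adj d a := fun h => had h.symm
  have : ¬ G.Adj d b := fun h => hbd h.symm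
  refine ⟨⟨⟨![a, b, c, d], fun i j h => ?_⟩, fun {i j} => ?_⟩⟩
  · fin_cases i <;> fin_cases j <;> simp_all
  · fin_cases i <;> fin_cases j <;> simp_all [pathGraph_adj] <;> assumption

lemma eq_bot_or_eq_top_of_isCompleteMultipartite (hG : G.IsCompleteMultipartite)
    (hGc : Gᶜ.IsCompleteMultipartite) : G = ⊥ ∨ G = ⊤ := by
  have hcl : ∀ x y z, x ≠ z → G.Adj x y → G.Adj y z → G.Adj x z := fun x y z hxz hxy hyz => by
    simpa [hxz] using hGc.trans x y z (by simp [hxy]) (by simp [hyz])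
  refine or_iff_not_imp_left.2 fun hbot => ?_
  obtain ⟨a, b, hab⟩ := ne_bot_iff_exists_adj.1 hbot
  have hb : ∀ z, z ≠ b → G.Adj z b := fun z hzb => by
    by_contra hzb'
    by_cases hza : G.Adj z a
    · exact hzb' (hcl z a b hzb hza hab)
    · exact hG.trans a z b (fun h => hza h.symm) hzb' hab
  ext u v
  refine ⟨fun h => h.ne, fun huv => ?_⟩
  rcases eq_or_ne v b with rfl | hvb
  · exact hb u huv
  rcases eq_or_ne u b with rfl | hub
  · exact (hb v hvb).symm
  exact hcl u b v huv (hb u hub) (hb v hvb).symm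

lemma subsingleton_of_iso_compl (e : G ≃g Gᶜ) (hGc : Gᶜ.IsCompleteMultipartite) :
    Subsingleton V := by
  refine ⟨fun a b => by_contra fun hab => ?_⟩
  have hadj := e.map_adj_iff (v := a) (w := b)
  rcases eq_bot_or_eq_top_of_isCompleteMultipartite (hGc.comap e.toEmbedding) hGc with h | h <;>
    subst h <;> simp [hab] at hadj

lemma eq_top_of_card_eq_two [Fintype V] (hV : Fintype.card V = 2) {v w : V} (hvw : G.Adj v w) :
    G = ⊤ := by
  have hmem : ∀ x, x = v ∨ x = w := fun x => by
    by_contra! hx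
    exact (Fintype.two_lt_card_iff.2 ⟨x, v, w, hx.1, hx.2, hvw.ne⟩).ne' hV
  ext a b
  refine ⟨fun h => h.ne, fun hab => ?_⟩
  rcases hmem a with rfl | rfl <;> rcases hmem b with rfl | rfl
  exacts [absurd rfl hab, hvw, hvw.symm, absurd rfl hab]

end SimpleGraph

namespace IsPerfectMatchingCut

variable {V : Type*} {G : SimpleGraph V} {V1 : Set V}

lemma compl (hcut : IsPerfectMatchingCut G V1) : IsPerfectMatchingCut G V1ᶜ := by
  simpa only [IsPerfectMatchingCut, Set.mem_compl_iff, not_iff_not] using hcut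

noncomputable def partner (hcut : IsPerfectMatchingCut G V1) (v : V) : V :=
  (hcut v).exists.choose

lemma adj_partner (hcut : IsPerfectMatchingCut G V1) (v : V) : G.Adj v (hcut.partner v) :=
  (hcut v).exists.choose_spec.1

lemma mem_iff_partner_notMem (hcut : IsPerfectMatchingCut G V1) (v : V) :
    v ∈ V1 ↔ hcut.partner v ∉ V1 :=
  (hcut v).exists.choose_spec.2

lemma eq_partner (hcut : IsPerfectMatchingCut G V1) {v w : V} (hvw : G.Adj v w)
    (hside : v ∈ V1 ↔ w ∉ V1) : w = hcut.partner v :=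
  (hcut v).unique ⟨hvw, hside⟩ ⟨hcut.adj_partner v, hcut.mem_iff_partner_notMem v⟩

@[simp]
lemma partner_partner (hcut : IsPerfectMatchingCut G V1) (v : V) :
    hcut.partner (hcut.partner v) = v :=
  (hcut.eq_partner (hcut.adj_partner v).symm (by
    have := hcut.mem_iff_partner_notMem v; tauto)).symm

lemma partner_injective (hcut : IsPerfectMatchingCut G V1) : Function.Injective hcut.partner :=
  Function.LeftInverse.injective hcut.partner_partner

lemma partner_ne (hcut : IsPerfectMatchingCut G V1) {x y : V} (hxy : x ∈ V1 ↔ y ∈ V1) :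
    hcut.partner x ≠ y := by
  rintro rfl
  have := hcut.mem_iff_partner_notMem x
  tauto

lemma not_adj_partner (hcut : IsPerfectMatchingCut G V1) {x y : V} (hxy : x ∈ V1 ↔ y ∈ V1)
    (hne : x ≠ y) : ¬ G.Adj (hcut.partner x) y := fun h =>
  hne (hcut.partner_partner x ▸ hcut.eq_partner h (by
    have := hcut.mem_iff_partner_notMem x; tauto)).symm

lemma adj_partner_partner (hcut : IsPerfectMatchingCut G V1) (hG : ¬ pathGraph 4 ⊴ G)
    {x y : V} (hxy : x ∈ V1 ↔ y ∈ V1) (hadj : G.Adj x y) :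
    G.Adj (hcut.partner x) (hcut.partner y) := by
  by_contra h
  exact hG <| isIndContained_pathGraph_four (hcut.adj_partner x).symm hadj
    (hcut.adj_partner y) (hcut.not_adj_partner hxy hadj.ne) h
    (fun h' => hcut.not_adj_partner hxy.symm hadj.ne' h'.symm) (hcut.partner_ne hxy)
    (hcut.partner_injective.ne hadj.ne) (hcut.partner_ne hxy.symm).symm

lemma adj_partner_partner_iff (hcut : IsPerfectMatchingCut G V1) (hG : ¬ pathGraph 4 ⊴ G)
    {x y : V} (hxy : x ∈ V1 ↔ y ∈ V1) :
    G.Adj (hcut.partner x) (hcut.partner y) ↔ G.Adj x y := by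
  refine ⟨fun h => ?_, hcut.adj_partner_partner hG hxy⟩
  have hside : hcut.partner x ∈ V1 ↔ hcut.partner y ∈ V1 := by
    have := hcut.mem_iff_partner_notMem x; have := hcut.mem_iff_partner_notMem y; tauto
  simpa using hcut.adj_partner_partner hG hside h

lemma adj_of_adj_of_adj (hcut : IsPerfectMatchingCut G V1) (hG : ¬ pathGraph 4 ⊴ G)
    {x y z : V} (hxy : x ∈ V1 ↔ y ∈ V1) (hyz : y ∈ V1 ↔ z ∈ V1) (hxz : x ≠ z)
    (h₁ : G.Adj x y) (h₂ : G.Adj y z) : G.Adj x z := by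
  by_contra h
  exact hG <| isIndContained_pathGraph_four (hcut.adj_partner x).symm h₁ h₂
    (hcut.not_adj_partner hxy h₁.ne) (hcut.not_adj_partner (hxy.trans hyz) hxz) h
    (hcut.partner_ne hxy) (hcut.partner_ne (hxy.trans hyz)) hxz

lemma isCompleteMultipartite_compl_induce (hcut : IsPerfectMatchingCut G V1)
    (hG : ¬ pathGraph 4 ⊴ G) : (G.induce V1)ᶜ.IsCompleteMultipartite := by
  refine ⟨fun x y z hxy hyz => ?_⟩
  simp only [compl_adj, comap_adj, Function.Embedding.subtype_apply, not_and, not_not,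
    ne_eq] at hxy hyz ⊢
  intro hxz
  rcases eq_or_ne x y with rfl | hxy'
  · exact hyz hxz
  rcases eq_or_ne y z with rfl | hyz'
  · exact hxy hxz
  exact hcut.adj_of_adj_of_adj hG (iff_of_true x.2 y.2) (iff_of_true y.2 z.2)
    (Subtype.coe_ne_coe.2 hxz) (hxy hxy') (hyz hyz')

noncomputable def partnerIso (hcut : IsPerfectMatchingCut G V1) (hG : ¬ pathGraph 4 ⊴ G) :
    G.induce V1 ≃g G.induce V1ᶜ where
  toFun x := ⟨hcut.partner x, (hcut.mem_iff_partner_notMem x).1 x.2⟩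
  invFun y := ⟨hcut.partner y, not_not.1 (mt (hcut.mem_iff_partner_notMem y).2 y.2)⟩
  left_inv x := Subtype.ext (hcut.partner_partner x)
  right_inv y := Subtype.ext (hcut.partner_partner y)
  map_rel_iff' {x y} := hcut.adj_partner_partner_iff hG (iff_of_true x.2 y.2)

end IsPerfectMatchingCut

/-- A cograph on `2n` vertices admitting a complementary decomposition with a perfect
matching cut must be `K₂`. -/
theorem cograph_comp_sub_pm {V : Type*} [Fintype V] (G : SimpleGraph V) (n : ℕ)
    (hn : 1 ≤ n) (hcard : Fintype.card V = 2 * n)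
    (hcog : IsEmpty (pathGraph 4 ↪g G))
    (V1 : Set V)
    (hcut : IsPerfectMatchingCut G V1)
    (hiso : Nonempty (G.induce V1 ≃g (G.induce V1ᶜ)ᶜ)) :
    n = 1 ∧ Nonempty (G ≃g completeGraph (Fin 2)) := by
  obtain ⟨φ⟩ := hiso
  have hP4 : ¬ pathGraph 4 ⊴ G := not_nonempty_iff.2 hcog
  let ψ := hcut.partnerIso hP4
  have hsmall : Nat.card ↥V1ᶜ ≤ 1 := Finite.card_le_one_iff_subsingleton.2 <|
    subsingleton_of_iso_compl (ψ.symm.trans φ) (hcut.compl.isCompleteMultipartite_compl_induce hP4)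
  have hsides : Nat.card V1 = Nat.card ↥V1ᶜ := Nat.card_congr ψ.toEquiv
  have htotal : Nat.card V1 + Nat.card ↥V1ᶜ = 2 * n := by
    rw [Nat.card_coe_set_eq, Nat.card_coe_set_eq, Set.ncard_add_ncard_compl,
      Nat.card_eq_fintype_card, hcard]
  have hn1 : n = 1 := by omega
  subst hn1
  obtain ⟨v⟩ : Nonempty V := Fintype.card_pos_iff.1 (by omega)
  rw [eq_top_of_card_eq_two hcard (hcut.adj_partner v)]
  exact ⟨rfl, ⟨Iso.completeGraph (Fintype.equivFinOfCardEq hcard)⟩⟩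
end

section
/- Let G be a connected graph with at least 5 vertices that is not 2-connected. Then either there exists a set S of at most 2 vertices of G such that G − S is 2-connected, or there exists a set S' of at most 2 vertices such that the complement of G minus S' is 2-connected. -/
/-!
Since `G` is not 2-connected, deleting a set `R` of at most one vertex (none if `G` is
disconnected, a cut vertex otherwise) disconnects it. There are then no edges between the two
sides of `G - R`, so its complement contains a spanning complete bipartite graph. That graph is
2-connected unless a side is a single vertex `a`, which is then universal in the complement; a
universal vertex makes a graph 2-connected as soon as deleting it leaves a connected graph.
Otherwise the complement of `G - R - a` is disconnected, and the same dichotomy applied to it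
(with `G` and `Gᶜ` exchanged) either makes `G - R - a` 2-connected or yields a vertex `b` with
`G - R - a - b` disconnected; then its complement is connected, so `a` is a universal vertex
whose deletion leaves `Gᶜ - R - b` connected.
-/

open SimpleGraph

/-- A graph is 2-connected: it is connected, has at least 3 vertices, and removing
any single vertex leaves it connected. -/
def TwoConnected {W : Type*} (H : SimpleGraph W) : Prop :=
  H.Connected ∧ 3 ≤ Nat.card W ∧ ∀ w : W, (H.induce {w}ᶜ).Connected

namespace SimpleGraph

variable {V : Type*} (G : SimpleGraph V)

lemma induce_compl (s : Set V) : Gᶜ.induce s = (G.induce s)ᶜ := by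
  ext x y
  simp [Subtype.ext_iff]

lemma connected_induce_compl_of_not_connected {s : Set V} (hs : s.Nonempty)
    (h : ¬(G.induce s).Connected) : (Gᶜ.induce s).Connected := by
  have := hs.to_subtype
  rw [induce_compl]
  exact (G.induce s).connected_or_connected_compl.resolve_left h

variable {G}

lemma induce_connected_of_forall_adj {s : Set V} {a : V} (ha : a ∈ s)
    (hadj : ∀ x ∈ s, x ≠ a → G.Adj a x) : (G.induce s).Connected := by
  rw [connected_iff_exists_forall_reachable]
  refine ⟨⟨a, ha⟩, fun ⟨x, hx⟩ => ?_⟩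
  obtain rfl | hxa := eq_or_ne x a
  · rfl
  · exact Adj.reachable (hadj x hx hxa)

lemma induce_connected_of_completeBipartite {s A B : Set V} (hAB : A ∪ B = s)
    (hA : A.Nonempty) (hB : B.Nonempty) (hadj : ∀ x ∈ A, ∀ y ∈ B, G.Adj x y) :
    (G.induce s).Connected := by
  obtain ⟨a, ha⟩ := hA
  obtain ⟨b, hb⟩ := hB
  subst hAB
  rw [connected_iff_exists_forall_reachable]
  refine ⟨⟨b, .inr hb⟩, fun ⟨x, hx⟩ => ?_⟩
  rcases hx with hx | hx
  · exact (Adj.reachable (show (G.induce (A ∪ B)).Adj ⟨x, .inl hx⟩ ⟨b, .inr hb⟩ from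
      hadj x hx b hb)).symm
  · have hab : (G.induce (A ∪ B)).Adj ⟨a, .inl ha⟩ ⟨b, .inr hb⟩ := hadj a ha b hb
    have hax : (G.induce (A ∪ B)).Adj ⟨a, .inl ha⟩ ⟨x, .inr hx⟩ := hadj a ha x hx
    exact hab.reachable.symm.trans hax.reachable

lemma exists_completeBipartite_compl_of_not_connected_induce {s : Set V} (hs : s.Nonempty)
    (h : ¬(G.induce s).Connected) :
    ∃ A B : Set V, A ∪ B = s ∧ A.Nonempty ∧ B.Nonempty ∧ ∀ x ∈ A, ∀ y ∈ B, Gᶜ.Adj x y := by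
  have := hs.to_subtype
  obtain ⟨u, w, huw⟩ : ∃ u w : s, ¬(G.induce s).Reachable u w := by
    simpa [Preconnected, connected_iff] using h
  let A : Set V := {z | ∃ hz : z ∈ s, (G.induce s).Reachable u ⟨z, hz⟩}
  refine ⟨A, s \ A, Set.union_sdiff_cancel fun z hz => hz.1, ⟨u, u.2, .rfl⟩,
    ⟨w, w.2, fun ⟨_, hw⟩ => huw hw⟩, ?_⟩
  rintro x ⟨hx, hux⟩ y ⟨hy, hyA⟩
  refine (compl_adj G x y).mpr ⟨fun hxy => hyA (hxy ▸ ⟨hx, hux⟩), fun hxy => hyA ⟨hy, ?_⟩⟩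
  exact hux.trans (Adj.reachable (show (G.induce s).Adj ⟨x, hx⟩ ⟨y, hy⟩ from hxy))

variable (G) in
def induceDiffSingletonIso {s : Set V} {x : V} (hx : x ∈ s) :
    G.induce (s \ {x}) ≃g (G.induce s).induce {(⟨x, hx⟩ : s)}ᶜ where
  toFun p := ⟨⟨p.1, p.2.1⟩, fun h => p.2.2 (congrArg Subtype.val h)⟩
  invFun q := ⟨q.1.1, q.1.2, fun h => q.2 (Subtype.ext h)⟩
  map_rel_iff' := .rfl

end SimpleGraph

section

variable {V : Type*} {G : SimpleGraph V}

lemma twoConnected_induce_iff {s : Set V} :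
    TwoConnected (G.induce s) ↔
      (G.induce s).Connected ∧ 3 ≤ s.ncard ∧ ∀ x ∈ s, (G.induce (s \ {x})).Connected := by
  simp only [TwoConnected, Nat.card_coe_set_eq, Subtype.forall]
  exact and_congr_right' <| and_congr_right' <|
    forall₂_congr fun x hx => (G.induceDiffSingletonIso hx).connected_iff.symm

lemma twoConnected_induce_of_forall_adj {s : Set V} {a : V} (ha : a ∈ s) (hs : 3 ≤ s.ncard)
    (hadj : ∀ x ∈ s, x ≠ a → G.Adj a x) (hconn : (G.induce (s \ {a})).Connected) :
    TwoConnected (G.induce s) := by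
  refine twoConnected_induce_iff.mpr ⟨induce_connected_of_forall_adj ha hadj, hs, fun x hx => ?_⟩
  obtain rfl | hxa := eq_or_ne x a
  · exact hconn
  · exact induce_connected_of_forall_adj ⟨ha, hxa.symm⟩ fun y hy hya => hadj y hy.1 hya

lemma twoConnected_induce_of_completeBipartite {s A B : Set V} (hAB : A ∪ B = s)
    (hA : 2 ≤ A.ncard) (hB : 2 ≤ B.ncard) (hadj : ∀ x ∈ A, ∀ y ∈ B, G.Adj x y) :
    TwoConnected (G.induce s) := by
  have hdisj : Disjoint A B :=
    Set.disjoint_left.mpr fun x hxA hxB => (hadj x hxA x hxB).ne rfl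
  have hs : 3 ≤ s.ncard := by
    rw [← hAB, Set.ncard_union_eq hdisj (Set.finite_of_ncard_pos (by omega))
      (Set.finite_of_ncard_pos (by omega))]
    omega
  have diff_nonempty {C : Set V} (hC : 2 ≤ C.ncard) (x : V) : (C \ {x}).Nonempty :=
    Set.nonempty_of_ncard_ne_zero (by have := Set.pred_ncard_le_ncard_sdiff_singleton C x; omega)
  refine twoConnected_induce_iff.mpr ⟨induce_connected_of_completeBipartite hAB
    (Set.nonempty_of_ncard_ne_zero (by omega)) (Set.nonempty_of_ncard_ne_zero (by omega)) hadj,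
    hs, fun x _ => ?_⟩
  exact induce_connected_of_completeBipartite (by rw [← hAB, Set.union_sdiff_distrib])
    (diff_nonempty hA x) (diff_nonempty hB x) fun y hy z hz => hadj y hy.1 z hz.1

lemma exists_forall_adj_of_completeBipartite [Finite V] {s A B : Set V} (hAB : A ∪ B = s)
    (hA : A.Nonempty) (hB : B.Nonempty) (hadj : ∀ x ∈ A, ∀ y ∈ B, G.Adj x y)
    (hsmall : A.ncard ≤ 1 ∨ B.ncard ≤ 1) : ∃ a ∈ s, ∀ x ∈ s, x ≠ a → G.Adj a x := by
  wlog hA1 : A.ncard ≤ 1 generalizing A B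
  · exact this (B.union_comm A ▸ hAB) hB hA (fun x hx y hy => (hadj y hy x hx).symm)
      hsmall.symm (hsmall.resolve_left hA1)
  have hA1 : A.ncard = 1 := by
    have := (Set.ncard_pos).mpr hA
    omega
  obtain ⟨a, rfl⟩ := Set.ncard_eq_one.mp hA1
  refine ⟨a, hAB ▸ .inl rfl, fun x hx hxa => hadj a rfl x ?_⟩
  rw [← hAB] at hx
  exact hx.resolve_left hxa

lemma twoConnected_compl_induce_or_exists_forall_adj [Finite V] {s : Set V} (hs : 3 ≤ s.ncard)
    (h : ¬(G.induce s).Connected) :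
    TwoConnected (Gᶜ.induce s) ∨
      ∃ a ∈ s, (∀ x ∈ s, x ≠ a → Gᶜ.Adj a x) ∧ ¬(Gᶜ.induce (s \ {a})).Connected := by
  obtain ⟨A, B, hAB, hA, hB, hadj⟩ := G.exists_completeBipartite_compl_of_not_connected_induce
    (Set.nonempty_of_ncard_ne_zero (by omega)) h
  by_cases hbig : 2 ≤ A.ncard ∧ 2 ≤ B.ncard
  · exact .inl (twoConnected_induce_of_completeBipartite hAB hbig.1 hbig.2 hadj)
  obtain ⟨a, ha, hadj_a⟩ := exists_forall_adj_of_completeBipartite hAB hA hB hadj (by omega)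
  by_cases hconn : (Gᶜ.induce (s \ {a})).Connected
  · exact .inl (twoConnected_induce_of_forall_adj ha hs hadj_a hconn)
  · exact .inr ⟨a, ha, hadj_a, hconn⟩

lemma exists_ncard_le_one_twoConnected_induce_diff [Finite V] {s : Set V} (hs : 4 ≤ s.ncard)
    (h : ¬(G.induce s).Connected) :
    ∃ S : Set V, S.ncard ≤ 1 ∧
      (TwoConnected (G.induce (s \ S)) ∨ TwoConnected (Gᶜ.induce (s \ S))) := by
  rcases twoConnected_compl_induce_or_exists_forall_adj (by omega) h with h | ⟨a, ha, hadj_a, hca⟩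
  · exact ⟨∅, by simp, .inr (by rwa [Set.sdiff_empty])⟩
  have hsa : (s \ {a}).ncard = s.ncard - 1 := Set.ncard_sdiff_singleton_of_mem ha
  rcases twoConnected_compl_induce_or_exists_forall_adj (by omega) hca with h | ⟨b, hb, -, hcab⟩
  · exact ⟨{a}, by simp, .inl (by simpa using h)⟩
  have hsb : (s \ {b}).ncard = s.ncard - 1 := Set.ncard_sdiff_singleton_of_mem hb.1
  have hab : a ∉ ({b} : Set V) := by rintro rfl; exact hb.2 rfl
  refine ⟨{b}, by simp, .inr (twoConnected_induce_of_forall_adj ⟨ha, hab⟩ (by omega)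
    (fun x hx hxa => hadj_a x hx.1 hxa) ?_)⟩
  rw [Set.sdiff_sdiff_comm]
  exact G.connected_induce_compl_of_not_connected
    (Set.nonempty_of_ncard_ne_zero (by have := Set.ncard_sdiff_singleton_of_mem hb; omega))
    (by simpa using hcab)

lemma exists_ncard_le_one_not_connected_induce_compl (hV : 3 ≤ Nat.card V)
    (h : ¬TwoConnected G) : ∃ R : Set V, R.ncard ≤ 1 ∧ ¬(G.induce Rᶜ).Connected := by
  by_contra! hR
  refine h ⟨?_, hV, fun w => hR {w} (by simp)⟩
  have hG := hR ∅ (by simp)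
  rw [Set.compl_empty] at hG
  exact G.induceUnivIso.connected_iff.mp hG

end

theorem remove_two_vertices_twoConnected_general {V : Type*} [Fintype V] (G : SimpleGraph V)
    (hcard : 5 ≤ Fintype.card V) (h2 : ¬ TwoConnected G) :
    (∃ S : Set V, S.ncard ≤ 2 ∧ TwoConnected (G.induce Sᶜ)) ∨
    (∃ S : Set V, S.ncard ≤ 2 ∧ TwoConnected (Gᶜ.induce Sᶜ)) := by
  rw [← Nat.card_eq_fintype_card] at hcard
  obtain ⟨R, hR, hdisc⟩ := exists_ncard_le_one_not_connected_induce_compl (by omega) h2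
  have hRc : 4 ≤ Rᶜ.ncard := by
    have := Set.ncard_add_ncard_compl R
    omega
  obtain ⟨S, hS, hS2⟩ := exists_ncard_le_one_twoConnected_induce_diff hRc hdisc
  have hRS : (R ∪ S).ncard ≤ 2 := (Set.ncard_union_le R S).trans (by omega)
  rw [Set.sdiff_eq, ← Set.compl_union] at hS2
  exact hS2.imp (fun h => ⟨R ∪ S, hRS, h⟩) (fun h => ⟨R ∪ S, hRS, h⟩)

/-- If `G` is connected, has at least 5 vertices and is not 2-connected, then either
some set of at most 2 vertices can be removed from `G` leaving a 2-connected graph, or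
some set of at most 2 vertices can be removed from `Gᶜ` leaving a 2-connected graph. -/
theorem remove_two_vertices_twoConnected {V : Type*} [Fintype V] (G : SimpleGraph V)
    (hconn : G.Connected) (hcard : 5 ≤ Fintype.card V) (h2 : ¬ TwoConnected G) :
    (∃ S : Set V, S.ncard ≤ 2 ∧ TwoConnected (G.induce Sᶜ)) ∨
    (∃ S : Set V, S.ncard ≤ 2 ∧ TwoConnected (Gᶜ.induce Sᶜ)) :=
  remove_two_vertices_twoConnected_general G hcard h2
end
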